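/- For k > 2 and n = 2k, the numbers ν(k, 2k, r) (the coefficient of x^{k−1} y^{k−1} in (x+y)^r (x²+y²)^{(2k−2−r)/2}) are all congruent to C(2k−2, k−1) modulo 4, for every even r with 0 ≤ r ≤ 2k−2. -/
import Mathlib

section Aux
open MvPolynomial Finsupp

private lemma single_add_inj' (a b i j : ℕ) :
    (Finsupp.single (0:Fin 2) i + Finsupp.single 1 j = Finsupp.single 0 a + Finsupp.single 1 b)
      ↔ (i = a ∧ j = b) := by
  constructor
  · intro h
    have h0 := DFunLike.congr_fun h 0
    have h1 := DFunLike.congr_fun h 1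
    simp [Finsupp.single_apply] at h0 h1
    exact ⟨h0, h1⟩
  · rintro ⟨rfl, rfl⟩; rfl

private lemma coeff_XY_pow {R : Type*} [CommSemiring R] (n a b : ℕ) (h : a + b = n) :
    MvPolynomial.coeff (Finsupp.single 0 a + Finsupp.single 1 b)
      ((X 0 + X 1) ^ n : MvPolynomial (Fin 2) R) = (n.choose a : R) := by
  rw [add_pow, coeff_sum]
  have : ∀ i ∈ Finset.range (n+1),
      MvPolynomial.coeff (Finsupp.single 0 a + Finsupp.single 1 b)
        (X 0 ^ i * X 1 ^ (n - i) * ((n.choose i : ℕ) : MvPolynomial (Fin 2) R))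
      = if i = a then (n.choose a : R) else 0 := by
    intro i hi
    rw [X_pow_eq_monomial, X_pow_eq_monomial, monomial_mul, mul_comm, ← C_eq_coe_nat,
      coeff_C_mul, coeff_monomial]
    rcases eq_or_ne i a with rfl | hia
    · have hb : n - i = b := by
        simp [Nat.lt_succ_iff] at hi; omega
      simp [hb]
    · have hne : ¬(Finsupp.single (0:Fin 2) i + Finsupp.single 1 (n-i)
          = Finsupp.single 0 a + Finsupp.single 1 b) := by
        rw [single_add_inj']; tauto
      rw [if_neg hne, mul_zero, if_neg hia]
  rw [Finset.sum_congr rfl this, Finset.sum_ite_eq' (Finset.range (n+1)) a]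
  simp [Nat.lt_succ_iff, show a ≤ n by omega]

private lemma even_central (m : ℕ) (hm : 1 ≤ m) : Even ((2*m).choose m) := by
  obtain ⟨m, rfl⟩ := Nat.exists_eq_add_of_le hm
  have h1 : 2 * (1 + m) = (2*m+1) + 1 := by ring
  have h2 : 1 + m = m + 1 := by ring
  rw [h1, h2, Nat.choose_succ_succ]
  have h3 : (2*m+1).choose (m+1) = (2*m+1).choose m := by
    rw [← Nat.choose_symm (by omega)]
    congr 1; omega
  rw [h3]
  exact ⟨_, rfl⟩

private lemma middle_even (r c m : ℕ) (hm : 1 ≤ m) (h : r + 2*c = 2*m) :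
    Even (MvPolynomial.coeff (Finsupp.single 0 m + Finsupp.single 1 m)
      (((X 0 + X 1) ^ r * (X 0 ^ 2 + X 1 ^ 2) ^ c : MvPolynomial (Fin 2) ℕ))) := by
  rw [Nat.even_iff, ← Nat.dvd_iff_mod_eq_zero, ← ZMod.natCast_eq_zero_iff]
  have := MvPolynomial.coeff_map (Nat.castRingHom (ZMod 2))
    (((X 0 + X 1) ^ r * (X 0 ^ 2 + X 1 ^ 2) ^ c : MvPolynomial (Fin 2) ℕ))
    (Finsupp.single 0 m + Finsupp.single 1 m)
  rw [show ((Nat.castRingHom (ZMod 2)) _ : ZMod 2)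
      = ((MvPolynomial.coeff _ _ : ℕ) : ZMod 2) from rfl] at this
  rw [← this]
  have hmap : (MvPolynomial.map (Nat.castRingHom (ZMod 2)))
      (((X 0 + X 1) ^ r * (X 0 ^ 2 + X 1 ^ 2) ^ c : MvPolynomial (Fin 2) ℕ))
      = ((X 0 + X 1) ^ (2*m) : MvPolynomial (Fin 2) (ZMod 2)) := by
    rw [map_mul, map_pow, map_pow, map_add, map_add, map_pow, map_pow,
      MvPolynomial.map_X, MvPolynomial.map_X]
    have hc : ((X 0 ^ 2 + X 1 ^ 2 : MvPolynomial (Fin 2) (ZMod 2))) = (X 0 + X 1)^2 := by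
      rw [add_pow_char]
    rw [hc, ← pow_mul, ← pow_add, h]
  rw [hmap, coeff_XY_pow (2*m) m m (by ring)]
  exact (ZMod.natCast_eq_zero_iff _ _).mpr (even_central m hm).two_dvd

private lemma coeff_two_XY (p : MvPolynomial (Fin 2) ℕ) (k : ℕ) (hk : 2 ≤ k) :
    MvPolynomial.coeff (Finsupp.single 0 (k-1) + Finsupp.single 1 (k-1))
      (2 * X 0 * X 1 * p)
    = 2 * MvPolynomial.coeff (Finsupp.single 0 (k-2) + Finsupp.single 1 (k-2)) p := by
  have hd : (Finsupp.single (0:Fin 2) (k-1) + Finsupp.single 1 (k-1) : Fin 2 →₀ ℕ)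
      = ((Finsupp.single 0 (k-2) + Finsupp.single 1 (k-2)) + Finsupp.single 0 1)
          + Finsupp.single 1 1 := by
    ext i; fin_cases i <;> simp [Finsupp.single_apply] <;> omega
  have hp : (2 * X 0 * X 1 * p : MvPolynomial (Fin 2) ℕ) = ((2*p) * X 0) * X 1 := by ring
  rw [hd, hp, coeff_mul_X, coeff_mul_X, two_mul, coeff_add, ← two_mul]

private lemma key_identity (r t : ℕ) :
    ((X 0 + X 1)^(r+2) * (X 0^2 + X 1^2)^t : MvPolynomial (Fin 2) ℕ)
      = (X 0 + X 1)^r * (X 0^2 + X 1^2)^(t+1)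
        + 2 * X 0 * X 1 * ((X 0 + X 1)^r * (X 0^2 + X 1^2)^t) := by ring

private lemma nu_step (k r t : ℕ) (hk : 2 < k) (h : r + 2*t = 2*k - 4) :
    MvPolynomial.coeff (Finsupp.single 0 (k-1) + Finsupp.single 1 (k-1))
      (((X 0 + X 1)^(r+2) * (X 0^2 + X 1^2)^t : MvPolynomial (Fin 2) ℕ))
    ≡ MvPolynomial.coeff (Finsupp.single 0 (k-1) + Finsupp.single 1 (k-1))
      (((X 0 + X 1)^r * (X 0^2 + X 1^2)^(t+1) : MvPolynomial (Fin 2) ℕ)) [MOD 4] := by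
  rw [key_identity, coeff_add, coeff_two_XY _ _ (by omega)]
  obtain ⟨e, he⟩ := middle_even r t (k-2) (by omega) (by omega)
  rw [he]
  unfold Nat.ModEq
  omega

end Aux

/-- ν(k, n, r): the coefficient of x^{n−k−1} y^{k−1} in (x+y)^r (x²+y²)^{(n−2−r)/2}. -/
noncomputable def nu (k n r : ℕ) : ℕ :=
  MvPolynomial.coeff (Finsupp.single 0 (n - k - 1) + Finsupp.single 1 (k - 1))
    (((MvPolynomial.X 0 + MvPolynomial.X 1) ^ r *
      (MvPolynomial.X 0 ^ 2 + MvPolynomial.X 1 ^ 2) ^ ((n - 2 - r) / 2) :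
        MvPolynomial (Fin 2) ℕ))

section Aux2
open MvPolynomial Finsupp

private lemma nu_eq (k r c : ℕ) (hk : 1 ≤ k) (hc : (2*k - 2 - r)/2 = c) :
    nu k (2*k) r = MvPolynomial.coeff (Finsupp.single 0 (k-1) + Finsupp.single 1 (k-1))
      (((X 0 + X 1)^r * (X 0^2 + X 1^2)^c : MvPolynomial (Fin 2) ℕ)) := by
  unfold nu
  have h1 : 2*k - k - 1 = k - 1 := by omega
  rw [h1, hc]

private lemma nu_aux (k : ℕ) (hk : 2 < k) :
    ∀ t, t ≤ k - 1 →
      nu k (2*k) (2*k - 2 - 2*t) ≡ Nat.choose (2*k - 2) (k-1) [MOD 4] := by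
  intro t
  induction t with
  | zero =>
    intro _
    rw [nu_eq k _ 0 (by omega) (by omega)]
    rw [pow_zero, mul_one, show 2*k - 2 - 2*0 = 2*k - 2 by omega,
      coeff_XY_pow _ _ _ (by omega), Nat.cast_id]
  | succ t ih =>
    intro ht
    have h1 : 2*k - 2 - 2*t = (2*k - 2 - 2*(t+1)) + 2 := by omega
    have h2 := nu_step k (2*k - 2 - 2*(t+1)) t hk (by omega)
    rw [nu_eq k _ (t+1) (by omega) (by omega)]
    have h3 := ih (by omega)
    rw [nu_eq k _ t (by omega) (by omega), h1] at h3
    exact (h2.symm.trans h3)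

end Aux2

/-- For k > 2 and n = 2k, all the numbers ν(k, 2k, r) for even r with
0 ≤ r ≤ 2k−2 are congruent to the central binomial coefficient C(2k−2, k−1)
modulo 4. -/
theorem nu_mod_four (k r : ℕ) (hk : 2 < k) (hre : Even r) (hr : r ≤ 2 * k - 2) :
    nu k (2 * k) r ≡ Nat.choose (2 * k - 2) (k - 1) [MOD 4] := by
  obtain ⟨s, rfl⟩ := hre
  have h := nu_aux k hk (k - 1 - s) (by omega)
  rwa [show 2*k - 2 - 2*(k - 1 - s) = s + s by omega] at h
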